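/- arXiv:1707.05852 — 2 statements merged into one kernel-verified Lean document; each statement's English description precedes it below -/
import Mathlib

section
/- Let ε ∈ (0, J_MS), let r > 0 satisfy μ({x : ‖x‖ ≤ r}) ≥ 1/2, and set a₀ := 1 + r + √(2(J_MS − ε)). If both ‖a‖ > a₀ and ‖b‖ > a₀, then J(a, b) > J_MS − ε. -/
/-!
On the ball `‖x‖ ≤ r`, which carries at least half of the mass, both estimators are at distance
at least `1 + s` from `x`, where `s = √(2(J_MS − ε))`.
Hence `J(a, b) ≥ (1 + s)² / 2 > s² / 2 ≥ J_MS − ε`.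
-/

open MeasureTheory
open scoped ENNReal

section

variable {E : Type*} [NormedAddCommGroup E]

lemma sq_le_sq_norm_sub_of_norm_le {x a : E} {r d : ℝ} (hd : 0 ≤ d) (hx : ‖x‖ ≤ r)
    (ha : r + d < ‖a‖) : d ^ 2 ≤ ‖a - x‖ ^ 2 := by
  have : ‖a‖ - ‖x‖ ≤ ‖a - x‖ := norm_sub_norm_le a x
  gcongr
  linarith

variable [MeasurableSpace E] [OpensMeasurableSpace E] [SecondCountableTopology E]
  {μ : Measure E} [IsFiniteMeasure μ]

lemma integrable_norm_sub_sq (hmom : Integrable (fun x => ‖x‖ ^ 2) μ) (v : E) :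
    Integrable (fun x => ‖v - x‖ ^ 2) μ := by
  have hx : MemLp id 2 μ :=
    (memLp_two_iff_integrable_sq_norm aestronglyMeasurable_id).2 hmom
  exact ((memLp_const v).sub hx).integrable_norm_pow two_ne_zero

lemma integrable_min_norm_sub_sq (hmom : Integrable (fun x => ‖x‖ ^ 2) μ) (a b : E) :
    Integrable (fun x => min (‖a - x‖ ^ 2) (‖b - x‖ ^ 2)) μ :=
  (integrable_norm_sub_sq hmom a).inf (integrable_norm_sub_sq hmom b)

lemma mul_measureReal_closedBall_le_integral_min_norm_sub_sq
    (hmom : Integrable (fun x => ‖x‖ ^ 2) μ) {a b : E} {r d : ℝ} (hd : 0 ≤ d)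
    (ha : r + d < ‖a‖) (hb : r + d < ‖b‖) :
    d ^ 2 * μ.real {x | ‖x‖ ≤ r} ≤ ∫ x, min (‖a - x‖ ^ 2) (‖b - x‖ ^ 2) ∂μ := by
  have hsub : {x : E | ‖x‖ ≤ r} ⊆ {x | d ^ 2 ≤ min (‖a - x‖ ^ 2) (‖b - x‖ ^ 2)} :=
    fun x hx => le_min (sq_le_sq_norm_sub_of_norm_le hd hx ha)
      (sq_le_sq_norm_sub_of_norm_le hd hx hb)
  calc d ^ 2 * μ.real {x | ‖x‖ ≤ r}
      ≤ d ^ 2 * μ.real {x | d ^ 2 ≤ min (‖a - x‖ ^ 2) (‖b - x‖ ^ 2)} :=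
        mul_le_mul_of_nonneg_left (measureReal_mono hsub) (sq_nonneg d)
    _ ≤ _ := mul_meas_ge_le_integral_of_nonneg (.of_forall fun _ => by positivity)
        (integrable_min_norm_sub_sq hmom a b) _

end

lemma lt_one_add_sqrt_two_mul_sq_div_two (t : ℝ) : t < (1 + √(2 * t)) ^ 2 / 2 := by
  have : 2 * t ≤ √(2 * t) ^ 2 := by rw [Real.sq_sqrt']; exact le_max_left _ _
  nlinarith [Real.sqrt_nonneg (2 * t)]

theorem cost_large_when_both_estimators_far_general
    (n : ℕ)
    (μ : Measure (EuclideanSpace ℝ (Fin n))) [IsProbabilityMeasure μ]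
    (hmom : Integrable (fun x => ‖x‖ ^ 2) μ)
    (JMS : ℝ)
    (ε : ℝ)
    (r : ℝ) (hrμ : (1 : ℝ≥0∞) / 2 ≤ μ {x | ‖x‖ ≤ r})
    (a₀ : ℝ) (ha₀ : a₀ = 1 + r + Real.sqrt (2 * (JMS - ε)))
    (a b : EuclideanSpace ℝ (Fin n)) (ha : a₀ < ‖a‖) (hb : a₀ < ‖b‖) :
    JMS - ε < ∫ x, min (‖a - x‖ ^ 2) (‖b - x‖ ^ 2) ∂μ := by
  set d := 1 + √(2 * (JMS - ε))
  have hd : 0 ≤ d := by positivity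
  have hhalf : 1 / 2 ≤ μ.real {x | ‖x‖ ≤ r} := by
    simpa [measureReal_def] using ENNReal.toReal_mono (measure_ne_top μ _) hrμ
  have hbound := mul_measureReal_closedBall_le_integral_min_norm_sub_sq hmom hd
    (by linarith : r + d < ‖a‖) (by linarith : r + d < ‖b‖)
  calc JMS - ε < d ^ 2 / 2 := lt_one_add_sqrt_two_mul_sq_div_two _
    _ ≤ d ^ 2 * μ.real {x | ‖x‖ ≤ r} := by nlinarith [sq_nonneg d]
    _ ≤ _ := hbound

/-- Let `ε ∈ (0, J_MS)`, let `r > 0` satisfy `μ({‖x‖ ≤ r}) ≥ 1/2`, and set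
`a₀ = 1 + r + √(2(J_MS − ε))`. If both `‖a‖ > a₀` and `‖b‖ > a₀`, then
`J(a,b) > J_MS − ε`. -/
theorem cost_large_when_both_estimators_far
    (n : ℕ) (hn : 1 ≤ n)
    (μ : Measure (EuclideanSpace ℝ (Fin n))) [IsProbabilityMeasure μ]
    (hac : μ ≪ volume)
    (hmom : Integrable (fun x => ‖x‖ ^ 2) μ)
    (JMS : ℝ) (hJMS : JMS = ∫ x, ‖x - (∫ y, y ∂μ)‖ ^ 2 ∂μ)
    (ε : ℝ) (hε : 0 < ε) (hεJ : ε < JMS)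
    (r : ℝ) (hr : 0 < r) (hrμ : (1 : ℝ≥0∞) / 2 ≤ μ {x | ‖x‖ ≤ r})
    (a₀ : ℝ) (ha₀ : a₀ = 1 + r + Real.sqrt (2 * (JMS - ε)))
    (a b : EuclideanSpace ℝ (Fin n)) (ha : a₀ < ‖a‖) (hb : a₀ < ‖b‖) :
    JMS - ε < ∫ x, min (‖a - x‖ ^ 2) (‖b - x‖ ^ 2) ∂μ :=
  cost_large_when_both_estimators_far_general n μ hmom JMS ε r hrμ a₀ ha₀ a b ha hb
end

section
/- For every χ > 0, φ(χ) − 2φ(0) + 2φ(0)Φ(χ) − χ(1 − Φ(χ)) < 0, where φ(0) = 1/√(2π). -/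
open MeasureTheory

/-- The standard normal probability density function. -/
noncomputable def stdGaussianPDF (x : ℝ) : ℝ :=
  Real.exp (-x ^ 2 / 2) / Real.sqrt (2 * Real.pi)

/-- The standard normal cumulative distribution function. -/
noncomputable def stdGaussianCDF (x : ℝ) : ℝ :=
  ∫ t in Set.Iic x, stdGaussianPDF t

/-!
Write `Q = 1 - Φ` and `c = φ(0)`; the claim is `h(χ) > 0` for `h(x) = (2c + x) Q(x) - φ(x)`.
Since `Q(0) = 1/2`, `h(0) = 0`, and Mills' inequality `x Q(x) < φ(x)` gives `h(x) → 0` as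
`x → ∞`. Moreover `h'(x) = Q(x) - 2c φ(x) = e^{-x²/2} (Q(x) e^{x²/2} - 2c²)`, and Mills'
inequality says exactly that `Q(x) e^{x²/2}` is strictly decreasing. Hence `h'` changes sign at
most once on `(0, ∞)`, from positive to negative: `h` rises and then falls between its two zero
boundary values, so it is positive in between.
-/

open ProbabilityTheory Real Set Filter Topology

theorem setIntegral_pos_of_pos_on {X : Type*} [MeasurableSpace X] {μ : Measure X} {s : Set X}
    {f : X → ℝ} (hs : MeasurableSet s) (hμs : μ s ≠ 0) (hfs : ∀ x ∈ s, 0 < f x)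
    (hfi : IntegrableOn f s μ) : 0 < ∫ x in s, f x ∂μ := by
  have hsupp : Function.support f ∩ s = s :=
    inter_eq_right.2 fun x hx => (hfs x hx).ne'
  rw [setIntegral_pos_iff_support_of_nonneg_ae ((ae_restrict_iff' hs).2
    (Eventually.of_forall fun x hx => (hfs x hx).le)) hfi, hsupp]
  exact pos_iff_ne_zero.2 hμs

/-- `hsign` says that `f'` changes sign at most once on `(a, ∞)`, from positive to negative. -/
theorem pos_of_deriv_pos_then_neg {f f' : ℝ → ℝ} {a x : ℝ}
    (hf : ∀ y, a ≤ y → HasDerivAt f (f' y) y) (ha : f a = 0) (htop : Tendsto f atTop (𝓝 0))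
    (hsign : ∀ s t, a < s → s < t → 0 ≤ f' t → 0 < f' s) (hx : a < x) : 0 < f x := by
  by_cases hfx : 0 ≤ f' x
  · have hmono : StrictMonoOn f (Icc a x) := by
      refine strictMonoOn_of_deriv_pos (convex_Icc a x)
        (fun y hy => (hf y hy.1).continuousAt.continuousWithinAt) fun y hy => ?_
      rw [interior_Icc] at hy
      rw [(hf y hy.1.le).deriv]
      exact hsign y x hy.1 hy.2 hfx
    simpa [ha] using hmono (left_mem_Icc.2 hx.le) (right_mem_Icc.2 hx.le) hx
  · have hanti : StrictAntiOn f (Ici x) := by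
      refine strictAntiOn_of_deriv_neg (convex_Ici x)
        (fun y hy => (hf y (hx.le.trans hy)).continuousAt.continuousWithinAt) fun y hy => ?_
      rw [interior_Ici] at hy
      rw [(hf y (hx.trans hy).le).deriv]
      by_contra! hy'
      exact hfx (hsign x y hx hy hy').le
    have hlim : 0 ≤ f (x + 1) := by
      refine le_of_tendsto htop ?_
      filter_upwards [eventually_ge_atTop (x + 1)] with t ht
      exact hanti.antitoneOn (mem_Ici.2 (by linarith)) (mem_Ici.2 (by linarith)) ht
    linarith [hanti self_mem_Ici (mem_Ici.2 (le_add_of_nonneg_right zero_le_one)) (lt_add_one x)]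

theorem stdGaussianPDF_eq_gaussianPDFReal : stdGaussianPDF = gaussianPDFReal 0 1 := by
  ext x
  simp [stdGaussianPDF, gaussianPDFReal, div_eq_inv_mul]

theorem stdGaussianPDF_pos (x : ℝ) : 0 < stdGaussianPDF x := by
  rw [stdGaussianPDF_eq_gaussianPDFReal]
  exact gaussianPDFReal_pos 0 1 x one_ne_zero

theorem integrable_stdGaussianPDF : Integrable stdGaussianPDF := by
  rw [stdGaussianPDF_eq_gaussianPDFReal]
  exact integrable_gaussianPDFReal 0 1

theorem integral_stdGaussianPDF : ∫ x, stdGaussianPDF x = 1 := by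
  rw [stdGaussianPDF_eq_gaussianPDFReal]
  exact integral_gaussianPDFReal_eq_one 0 one_ne_zero

theorem stdGaussianPDF_zero : stdGaussianPDF 0 = 1 / √(2 * π) := by
  simp [stdGaussianPDF]

theorem stdGaussianPDF_mul_exp (x : ℝ) :
    stdGaussianPDF x * exp (x ^ 2 / 2) = stdGaussianPDF 0 := by
  rw [stdGaussianPDF, stdGaussianPDF_zero, div_mul_eq_mul_div, ← exp_add, neg_div,
    neg_add_cancel, exp_zero]

theorem hasDerivAt_stdGaussianPDF (x : ℝ) :
    HasDerivAt stdGaussianPDF (-x * stdGaussianPDF x) x := by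
  have h : HasDerivAt (fun t : ℝ => -t ^ 2 / 2) (-x) x :=
    ((hasDerivAt_pow 2 x).fun_neg.div_const 2).congr_deriv (by push_cast; ring)
  exact (h.exp.div_const (√(2 * π))).congr_deriv (by unfold stdGaussianPDF; ring)

theorem continuous_stdGaussianPDF : Continuous stdGaussianPDF :=
  continuous_iff_continuousAt.2 fun x => (hasDerivAt_stdGaussianPDF x).continuousAt

theorem tendsto_stdGaussianPDF_atTop : Tendsto stdGaussianPDF atTop (𝓝 0) := by
  have h : Tendsto (fun x : ℝ => -x ^ 2 / 2) atTop atBot := by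
    simpa only [Function.comp_def, neg_div] using tendsto_neg_atTop_atBot.comp
      ((tendsto_pow_atTop two_ne_zero).atTop_div_const two_pos)
  have := (tendsto_exp_atBot.comp h).div_const (√(2 * π))
  rwa [zero_div] at this

theorem integrable_mul_stdGaussianPDF : Integrable fun x => x * stdGaussianPDF x := by
  have h := (integrable_mul_exp_neg_mul_sq (b := 1 / 2) (by norm_num)).div_const (√(2 * π))
  convert h using 2 with x
  rw [stdGaussianPDF]; ring_nf

theorem integral_Ioi_mul_stdGaussianPDF (x : ℝ) :
    ∫ t in Ioi x, t * stdGaussianPDF t = stdGaussianPDF x := by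
  have h := integral_Ioi_of_hasDerivAt_of_tendsto (f := fun t => -stdGaussianPDF t) (m := 0)
    (hasDerivAt_stdGaussianPDF x).continuousAt.neg.continuousWithinAt
    (fun t _ => by simpa using (hasDerivAt_stdGaussianPDF t).fun_neg)
    integrable_mul_stdGaussianPDF.integrableOn (by simpa using tendsto_stdGaussianPDF_atTop.neg)
  simpa using h

noncomputable def stdGaussianTail (x : ℝ) : ℝ := ∫ t in Ioi x, stdGaussianPDF t

theorem stdGaussianTail_eq_one_sub_stdGaussianCDF (x : ℝ) :
    stdGaussianTail x = 1 - stdGaussianCDF x := by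
  rw [← integral_stdGaussianPDF, ← intervalIntegral.integral_Iic_add_Ioi
    integrable_stdGaussianPDF.integrableOn integrable_stdGaussianPDF.integrableOn,
    stdGaussianCDF, stdGaussianTail, add_sub_cancel_left]

theorem stdGaussianTail_nonneg (x : ℝ) : 0 ≤ stdGaussianTail x :=
  setIntegral_nonneg measurableSet_Ioi fun t _ => (stdGaussianPDF_pos t).le

theorem stdGaussianTail_zero : stdGaussianTail 0 = 1 / 2 := by
  have hpdf : ∀ t, stdGaussianPDF t = exp (-(1 / 2) * t ^ 2) / √(2 * π) := fun t => by
    rw [stdGaussianPDF]; ring_nf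
  simp_rw [stdGaussianTail, hpdf, integral_div, integral_gaussian_Ioi,
    show π / (1 / 2) = 2 * π by ring]
  have : √(2 * π) ≠ 0 := by positivity
  field_simp

/-- Mills' inequality. -/
theorem mul_stdGaussianTail_lt_stdGaussianPDF (x : ℝ) :
    x * stdGaussianTail x < stdGaussianPDF x := by
  have hint : IntegrableOn (fun t => t * stdGaussianPDF t - x * stdGaussianPDF t) (Ioi x) :=
    integrable_mul_stdGaussianPDF.integrableOn.sub
      (integrable_stdGaussianPDF.integrableOn.const_mul x)
  have hpos : 0 < ∫ t in Ioi x, (t * stdGaussianPDF t - x * stdGaussianPDF t) :=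
    setIntegral_pos_of_pos_on measurableSet_Ioi (by simp [volume_Ioi])
      (fun t ht => by rw [← sub_mul]; exact mul_pos (sub_pos.2 ht) (stdGaussianPDF_pos t)) hint
  rwa [integral_sub integrable_mul_stdGaussianPDF.integrableOn
    (integrable_stdGaussianPDF.integrableOn.const_mul x), integral_Ioi_mul_stdGaussianPDF,
    integral_const_mul, sub_pos] at hpos

theorem hasDerivAt_stdGaussianCDF (x : ℝ) : HasDerivAt stdGaussianCDF (stdGaussianPDF x) x := by
  have hcdf : ∀ y,
      stdGaussianCDF 0 + ∫ t in (0 : ℝ)..y, stdGaussianPDF t = stdGaussianCDF y := fun y => by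
    rw [← intervalIntegral.integral_Iic_sub_Iic integrable_stdGaussianPDF.integrableOn
      integrable_stdGaussianPDF.integrableOn, stdGaussianCDF, stdGaussianCDF, add_sub_cancel]
  have h := (continuous_stdGaussianPDF.integral_hasStrictDerivAt 0 x).hasDerivAt.const_add
    (stdGaussianCDF 0)
  simpa only [hcdf] using h

theorem hasDerivAt_stdGaussianTail (x : ℝ) :
    HasDerivAt stdGaussianTail (-stdGaussianPDF x) x := by
  rw [show stdGaussianTail = fun y => 1 - stdGaussianCDF y from
    funext stdGaussianTail_eq_one_sub_stdGaussianCDF]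
  exact (hasDerivAt_stdGaussianCDF x).const_sub 1

theorem tendsto_mul_stdGaussianTail_atTop :
    Tendsto (fun x => x * stdGaussianTail x) atTop (𝓝 0) := by
  refine tendsto_of_tendsto_of_tendsto_of_le_of_le' tendsto_const_nhds
    tendsto_stdGaussianPDF_atTop ?_ (Eventually.of_forall fun x =>
      (mul_stdGaussianTail_lt_stdGaussianPDF x).le)
  filter_upwards [eventually_ge_atTop 0] with x hx
  exact mul_nonneg hx (stdGaussianTail_nonneg x)

theorem tendsto_stdGaussianTail_atTop : Tendsto stdGaussianTail atTop (𝓝 0) := by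
  refine tendsto_of_tendsto_of_tendsto_of_le_of_le' tendsto_const_nhds
    tendsto_mul_stdGaussianTail_atTop (Eventually.of_forall stdGaussianTail_nonneg) ?_
  filter_upwards [eventually_ge_atTop 1] with x hx
  exact le_mul_of_one_le_left (stdGaussianTail_nonneg x) hx

theorem strictAnti_stdGaussianTail_mul_exp :
    StrictAnti fun x => stdGaussianTail x * exp (x ^ 2 / 2) := by
  have hderiv : ∀ x, HasDerivAt (fun x => stdGaussianTail x * exp (x ^ 2 / 2))
      ((x * stdGaussianTail x - stdGaussianPDF x) * exp (x ^ 2 / 2)) x := fun x => by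
    have hsq : HasDerivAt (fun t : ℝ => t ^ 2 / 2) x x :=
      ((hasDerivAt_pow 2 x).div_const 2).congr_deriv (by push_cast; ring)
    exact ((hasDerivAt_stdGaussianTail x).mul hsq.exp).congr_deriv (by ring)
  refine strictAnti_of_deriv_neg fun x => ?_
  rw [(hderiv x).deriv]
  exact mul_neg_of_neg_of_pos (sub_neg.2 (mul_stdGaussianTail_lt_stdGaussianPDF x)) (exp_pos _)

theorem stdGaussianPDF_lt_mul_stdGaussianTail {x : ℝ} (hx : 0 < x) :
    stdGaussianPDF x < (2 * stdGaussianPDF 0 + x) * stdGaussianTail x := by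
  set c := stdGaussianPDF 0
  have hderiv : ∀ y, 0 ≤ y → HasDerivAt (fun y => (2 * c + y) * stdGaussianTail y -
      stdGaussianPDF y) (stdGaussianTail y - 2 * c * stdGaussianPDF y) y := fun y _ =>
    ((((hasDerivAt_id y).const_add (2 * c)).mul (hasDerivAt_stdGaussianTail y)).sub
      (hasDerivAt_stdGaussianPDF y)).congr_deriv (by simp only [id]; ring)
  have hzero : (2 * c + 0) * stdGaussianTail 0 - stdGaussianPDF 0 = 0 := by
    rw [stdGaussianTail_zero]; ring
  have htop : Tendsto (fun y => (2 * c + y) * stdGaussianTail y - stdGaussianPDF y)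
      atTop (𝓝 0) := by
    have h := ((tendsto_stdGaussianTail_atTop.const_mul (2 * c)).add
      tendsto_mul_stdGaussianTail_atTop).sub tendsto_stdGaussianPDF_atTop
    simp only [mul_zero, add_zero, sub_zero] at h
    exact h.congr fun y => by ring
  have hderiv_mul_exp : ∀ y, (stdGaussianTail y - 2 * c * stdGaussianPDF y) * exp (y ^ 2 / 2) =
      stdGaussianTail y * exp (y ^ 2 / 2) - 2 * c * c := fun y => by
    rw [sub_mul, mul_assoc, stdGaussianPDF_mul_exp]
  refine sub_pos.1 (pos_of_deriv_pos_then_neg (f := fun y =>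
    (2 * c + y) * stdGaussianTail y - stdGaussianPDF y) hderiv hzero htop
    (fun s t _ hst ht => ?_) hx)
  have hmono := strictAnti_stdGaussianTail_mul_exp hst
  have ht' := mul_nonneg ht (exp_pos (t ^ 2 / 2)).le
  rw [hderiv_mul_exp] at ht'
  refine (mul_pos_iff_of_pos_right (exp_pos (s ^ 2 / 2))).1 ?_
  rw [hderiv_mul_exp]
  linarith

/-- For every `χ > 0`,
`φ(χ) − 2φ(0) + 2φ(0)Φ(χ) − χ(1 − Φ(χ)) < 0`, where `φ(0) = 1/√(2π)`. -/
theorem g2_HT_neg (χ : ℝ) (hχ : 0 < χ) :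
    stdGaussianPDF χ - 2 * (1 / Real.sqrt (2 * Real.pi)) +
        2 * (1 / Real.sqrt (2 * Real.pi)) * stdGaussianCDF χ -
      χ * (1 - stdGaussianCDF χ) < 0 := by
  have h := stdGaussianPDF_lt_mul_stdGaussianTail hχ
  rw [stdGaussianPDF_zero, stdGaussianTail_eq_one_sub_stdGaussianCDF] at h
  linear_combination h
end
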